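/- arXiv:1912.08012 — 2 statements merged into one kernel-verified Lean document; each statement's English description precedes it below -/
import Mathlib

section
/- For the Neumann Green's function G_ℍ of the upper half-plane and the Möbius map φ(z) = (z-i)/(z+i) from ℍ to the unit disk 𝔻, one has G_𝔻(φ(z), y) = G_ℍ(z, φ⁻¹(y)) + 2 log|z+i| - 2 log|y-1| for all z ∈ ℍ and y ∈ 𝔻 with y ≠ 1 and φ(z) ≠ y. -/
open Complex ComplexConjugate

/-! The Cayley map `φ` satisfies `φ(z) - y = (1 - y)(z - φ⁻¹(y))/(z + i)` and
`1 - φ(z) ȳ = (1 - ȳ)(z - conj φ⁻¹(y))/(z + i)`, so the product inside `G_𝔻(φ(z), y)` is the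
product inside `G_ℍ(z, φ⁻¹(y))` times `|y - 1|² / |z + i|²`. The two factors of the latter are
nonzero, the first because `φ(z) ≠ y`, the second because `|φ(z) ȳ| < 1`; so the logarithm
splits. -/

noncomputable def cayley (z : ℂ) : ℂ := (z - I) / (z + I)

noncomputable def cayleyInv (w : ℂ) : ℂ := I * (1 + w) / (1 - w)

section Cayley

variable {z w : ℂ}

lemma add_I_ne_zero_of_im_pos (hz : 0 < z.im) : z + I ≠ 0 := by
  intro h
  have := congrArg im h
  simp only [add_im, I_im, zero_im] at this
  linarith

lemma norm_cayley_lt_one (hz : 0 < z.im) : ‖cayley z‖ < 1 := by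
  have hzI := add_I_ne_zero_of_im_pos hz
  rw [cayley, norm_div, div_lt_one (norm_pos_iff.mpr hzI)]
  refine lt_of_pow_lt_pow_left₀ 2 (norm_nonneg _) ?_
  simp only [Complex.sq_norm, normSq_apply, sub_re, add_re, I_re, sub_im, add_im, I_im]
  nlinarith

lemma cayley_sub (hz : z + I ≠ 0) (hw : w ≠ 1) :
    cayley z - w = (1 - w) * (z - cayleyInv w) / (z + I) := by
  have hw' : 1 - w ≠ 0 := sub_ne_zero.mpr hw.symm
  rw [cayley, cayleyInv]
  field_simp
  ring

lemma one_sub_cayley_mul_conj (hz : z + I ≠ 0) (hw : w ≠ 1) :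
    1 - cayley z * conj w = (1 - conj w) * (z - conj (cayleyInv w)) / (z + I) := by
  have hw' : 1 - conj w ≠ 0 := by
    rw [← map_one (starRingEnd ℂ), ← map_sub, map_ne_zero]
    exact sub_ne_zero.mpr hw.symm
  rw [cayley, cayleyInv, map_div₀, map_mul, map_add, map_sub, map_one, conj_I]
  field_simp
  ring

lemma norm_cayley_sub_mul_norm_one_sub (hz : z + I ≠ 0) (hw : w ≠ 1) :
    ‖cayley z - w‖ * ‖1 - cayley z * conj w‖ =
      ‖z - cayleyInv w‖ * ‖z - conj (cayleyInv w)‖ * (‖w - 1‖ ^ 2 / ‖z + I‖ ^ 2) := by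
  have h₁ : ‖1 - w‖ = ‖w - 1‖ := norm_sub_rev 1 w
  have h₂ : ‖1 - conj w‖ = ‖w - 1‖ := by
    rw [← norm_conj, map_sub, map_one, conj_conj, h₁]
  rw [cayley_sub hz hw, one_sub_cayley_mul_conj hz hw]
  simp only [norm_div, norm_mul, h₁, h₂]
  ring

end Cayley

/-- Relation between the Neumann Green's functions of the upper half-plane and of the
unit disk under the Möbius map `φ(z) = (z-i)/(z+i)`, with inverse `φ⁻¹(w) = i(1+w)/(1-w)`:
`G_𝔻(φ(z), y) = G_ℍ(z, φ⁻¹(y)) + 2 log|z+i| - 2 log|y-1|`. -/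
theorem green_disk_halfplane_relation (z y : ℂ) (hz : 0 < z.im) (hy : ‖y‖ < 1)
    (hy1 : y ≠ 1) (hne : (z - I) / (z + I) ≠ y) :
    -Real.log (‖(z - I) / (z + I) - y‖ *
        ‖1 - (z - I) / (z + I) * (starRingEnd ℂ) y‖) =
      -Real.log (‖z - I * (1 + y) / (1 - y)‖ *
          ‖z - (starRingEnd ℂ) (I * (1 + y) / (1 - y))‖)
        + 2 * Real.log ‖z + I‖ - 2 * Real.log ‖y - 1‖ := by
  change -Real.log (‖cayley z - y‖ * ‖1 - cayley z * conj y‖) =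
    -Real.log (‖z - cayleyInv y‖ * ‖z - conj (cayleyInv y)‖)
      + 2 * Real.log ‖z + I‖ - 2 * Real.log ‖y - 1‖
  have hzI := add_I_ne_zero_of_im_pos hz
  have hw : z - cayleyInv y ≠ 0 := by
    contrapose! hne
    rw [← sub_eq_zero, ← cayley, cayley_sub hzI hy1, hne, mul_zero, zero_div]
  have hw' : z - conj (cayleyInv y) ≠ 0 := by
    have : ‖cayley z * conj y‖ < 1 := by
      rw [norm_mul, norm_conj]
      nlinarith [norm_cayley_lt_one hz, norm_nonneg (cayley z), norm_nonneg y]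
    have hden : 1 - cayley z * conj y ≠ 0 :=
      sub_ne_zero.mpr fun h => this.ne (by rw [← h, norm_one])
    rw [one_sub_cayley_mul_conj hzI hy1] at hden
    exact right_ne_zero_of_mul (left_ne_zero_of_mul hden)
  have hy1' : y - 1 ≠ 0 := sub_ne_zero.mpr hy1
  rw [norm_cayley_sub_mul_norm_one_sub hzI hy1, Real.log_mul (by positivity) (by positivity),
    Real.log_div (by positivity) (by positivity), Real.log_pow, Real.log_pow]
  push_cast
  ring
end

section
/- In the half-disk D = R𝔻 ∩ ℍ with 0 < r < R, let ξ_r(z) = -2 log(max(r,|z|)) + 2 log R. Then for every smooth function φ on D (with compact support in D ∪ (-R,R)), the Dirichlet inner product (φ, ξ_r)_∇ equals the mean value of φ over the semicircle ∂B(0,r) ∩ ℍ. -/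
open Complex MeasureTheory

/-- The function `ξ_r(z) = -2 log(max(r,|z|)) + 2 log R` on the half-disk `R𝔻 ∩ ℍ`. -/
noncomputable def xiFn (R r : ℝ) (z : ℂ) : ℝ :=
  -2 * Real.log (max r (‖z‖)) + 2 * Real.log R

open Set Real

noncomputable def Gfn (r : ℝ) (φ : ℂ → ℝ) (z : ℂ) : ℝ :=
  if 0 < z.im ∧ r < ‖z‖ then
    -2 * (z.re * fderiv ℝ φ z 1 + z.im * fderiv ℝ φ z Complex.I) / Complex.normSq z
  else 0

section DirichletAux

variable {R r : ℝ} {φ : ℂ → ℝ}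

lemma normSq_hasFDerivAt (z : ℂ) :
    HasFDerivAt (fun w : ℂ => Complex.normSq w) ((2*z.re) • Complex.reCLM + (2*z.im) • Complex.imCLM) z := by
  have h1 : HasFDerivAt (fun w : ℂ => w.re * w.re + w.im * w.im)
      ((z.re • Complex.reCLM + z.re • Complex.reCLM) + (z.im • Complex.imCLM + z.im • Complex.imCLM)) z := by
    exact ((Complex.reCLM.hasFDerivAt.mul Complex.reCLM.hasFDerivAt).add
      (Complex.imCLM.hasFDerivAt.mul Complex.imCLM.hasFDerivAt))
  have : (fun w : ℂ => Complex.normSq w) = fun w : ℂ => w.re * w.re + w.im * w.im := by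
    funext w; simp [Complex.normSq_apply]
  rw [this]
  convert h1 using 1
  module

lemma xi_fderiv_apply {R r : ℝ} (hr : 0 < r) {z : ℂ} (hz : r < ‖z‖) (v : ℂ) :
    fderiv ℝ (xiFn R r) z v = -(2 * z.re * v.re + 2 * z.im * v.im) / Complex.normSq z := by
  have hzne : Complex.normSq z ≠ 0 := by
    have : (0:ℝ) < ‖z‖ := lt_trans hr hz
    simpa [Complex.normSq_pos] using (norm_pos_iff.mp this)
  have hf : HasFDerivAt (fun w => -Real.log (Complex.normSq w) + 2 * Real.log R)
      (-(Complex.normSq z)⁻¹ • ((2*z.re) • Complex.reCLM + (2*z.im) • Complex.imCLM)) z := by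
    have := ((normSq_hasFDerivAt z).log hzne).neg.add_const (2 * Real.log R)
    exact this.congr_fderiv (by ext v; simp; ring)
  have hev : (fun w => -Real.log (Complex.normSq w) + 2 * Real.log R) =ᶠ[nhds z] xiFn R r := by
    have hopen : IsOpen {w : ℂ | r < ‖w‖} := isOpen_lt continuous_const continuous_norm
    filter_upwards [hopen.mem_nhds hz] with w hw
    have h1 : max r (‖w‖) = ‖w‖ := max_eq_right (le_of_lt hw)
    have h2 : Real.log (‖w‖) = Real.log (Complex.normSq w) / 2 := by
      rw [Complex.norm_def, Real.log_sqrt (Complex.normSq_nonneg w)]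
    simp only [xiFn, h1, h2]; ring
  have := (hf.congr_of_eventuallyEq hev.symm).fderiv
  rw [this]
  simp [Complex.normSq_apply]
  ring

lemma sphere_null (r : ℝ) : volume {z : ℂ | ‖z‖ = r} = 0 := by
  have h : {z : ℂ | ‖z‖ = r} = Metric.sphere (0:ℂ) r := by
    ext z; simp [Complex.dist_eq]
  rw [h]
  exact Measure.addHaar_sphere volume 0 r

lemma fderiv_phi_zero (hsupp : tsupport φ ⊆ {z : ℂ | ‖z‖ < R ∧ 0 ≤ z.im})
    {z : ℂ} (hz : R ≤ ‖z‖ ∨ z.im < 0) : fderiv ℝ φ z = 0 := by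
  have hz' : z ∉ tsupport φ := by
    intro h
    rcases hsupp h with ⟨h1, h2⟩
    rcases hz with h | h
    · exact absurd h1 (not_lt.2 h)
    · exact absurd h2 (not_le.2 h)
  exact Classical.byContradiction fun h => hz' (support_fderiv_subset ℝ (by simpa using h))

lemma Gfn_measurable (hφ : ContDiff ℝ (⊤ : ℕ∞) φ) : Measurable (Gfn r φ) := by
  have hc : Continuous (fderiv ℝ φ) := hφ.continuous_fderiv (by simp)
  have h1 : Continuous fun z : ℂ => fderiv ℝ φ z 1 := hc.clm_apply continuous_const
  have hI : Continuous fun z : ℂ => fderiv ℝ φ z Complex.I := hc.clm_apply continuous_const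
  have hmf : Measurable fun z : ℂ =>
      -2 * (z.re * fderiv ℝ φ z 1 + z.im * fderiv ℝ φ z Complex.I) / Complex.normSq z := by
    apply Measurable.div
    · exact (continuous_const.mul ((Complex.continuous_re.mul h1).add (Complex.continuous_im.mul hI))).measurable
    · exact Complex.continuous_normSq.measurable
  have hs : MeasurableSet {z : ℂ | 0 < z.im ∧ r < ‖z‖} := by
    exact ((isOpen_lt continuous_const Complex.continuous_im).inter
      (isOpen_lt continuous_const continuous_norm)).measurableSet
  unfold Gfn
  exact Measurable.ite hs hmf measurable_const

lemma Gfn_bound (hr : 0 < r) (hφ : ContDiff ℝ (⊤ : ℕ∞) φ) (hφc : HasCompactSupport φ) :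
    ∃ M : ℝ, 0 ≤ M ∧ ∀ z, |Gfn r φ z| ≤ M := by
  have hc : Continuous fun z : ℂ => ‖fderiv ℝ φ z‖ := (hφ.continuous_fderiv (by simp)).norm
  obtain ⟨x, hx⟩ := hc.exists_forall_ge_of_hasCompactSupport (hφc.fderiv (𝕜 := ℝ)).norm
  set C := ‖fderiv ℝ φ x‖ with hC
  have hC0 : 0 ≤ C := norm_nonneg _
  refine ⟨4 * C / r, by positivity, fun z => ?_⟩
  unfold Gfn
  split_ifs with h
  · obtain ⟨him, habs⟩ := h
    have hza : 0 < ‖z‖ := lt_trans hr habs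
    have hnsq : Complex.normSq z = ‖z‖ * ‖z‖ := (Complex.normSq_eq_norm_sq z).trans (sq ‖z‖)
    have hD1 : |fderiv ℝ φ z 1| ≤ C := by
      calc |fderiv ℝ φ z 1| ≤ ‖fderiv ℝ φ z‖ * ‖(1:ℂ)‖ := (fderiv ℝ φ z).le_opNorm 1
      _ ≤ C := by simpa using hx z
    have hDI : |fderiv ℝ φ z Complex.I| ≤ C := by
      calc |fderiv ℝ φ z Complex.I| ≤ ‖fderiv ℝ φ z‖ * ‖Complex.I‖ := (fderiv ℝ φ z).le_opNorm _
      _ ≤ C := by simpa [Complex.norm_I] using hx z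
    have hnum : |(-2 : ℝ) * (z.re * fderiv ℝ φ z 1 + z.im * fderiv ℝ φ z Complex.I)|
        ≤ 2 * (‖z‖ * C + ‖z‖ * C) := by
      rw [abs_mul]
      have habs2 : |(-2:ℝ)| = 2 := by norm_num
      rw [habs2]
      have h3 : |z.re * fderiv ℝ φ z 1 + z.im * fderiv ℝ φ z Complex.I|
          ≤ ‖z‖ * C + ‖z‖ * C := by
        refine (abs_add_le _ _).trans (add_le_add ?_ ?_)
        · rw [abs_mul]
          exact mul_le_mul (Complex.abs_re_le_norm z) hD1 (abs_nonneg _) (norm_nonneg z)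
        · rw [abs_mul]
          exact mul_le_mul (Complex.abs_im_le_norm z) hDI (abs_nonneg _) (norm_nonneg z)
      exact mul_le_mul_of_nonneg_left h3 (by norm_num)
    rw [abs_div, hnsq, abs_of_pos (mul_pos hza hza)]
    rw [div_le_div_iff₀ (mul_pos hza hza) hr]
    calc |(-2 : ℝ) * (z.re * fderiv ℝ φ z 1 + z.im * fderiv ℝ φ z Complex.I)| * r
        ≤ (2 * (‖z‖ * C + ‖z‖ * C)) * ‖z‖ := by
          apply mul_le_mul hnum (le_of_lt habs) (le_of_lt hr)
          positivity
      _ = 4 * C * (‖z‖ * ‖z‖) := by ring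
  · rw [abs_zero]; positivity

lemma xi_fderiv_inner (R : ℝ) {r : ℝ} (hr : 0 < r) {z : ℂ} (hz : ‖z‖ < r) :
    fderiv ℝ (xiFn R r) z = 0 := by
  have hopen : IsOpen {w : ℂ | ‖w‖ < r} := isOpen_lt continuous_norm continuous_const
  have hev : xiFn R r =ᶠ[nhds z] fun _ => -2 * Real.log r + 2 * Real.log R := by
    filter_upwards [hopen.mem_nhds hz] with w hw
    simp [xiFn, max_eq_left (le_of_lt hw)]
  rw [Filter.EventuallyEq.fderiv_eq hev, fderiv_fun_const]
  rfl

lemma step1 {R r : ℝ} (hr : 0 < r) (hR : r < R) {φ : ℂ → ℝ}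
    (hsupp : tsupport φ ⊆ {z : ℂ | ‖z‖ < R ∧ 0 ≤ z.im}) :
    ∫ z in {z : ℂ | ‖z‖ < R ∧ 0 < z.im},
      (fderiv ℝ φ z 1 * fderiv ℝ (xiFn R r) z 1 +
        fderiv ℝ φ z Complex.I * fderiv ℝ (xiFn R r) z Complex.I)
      = ∫ z, Gfn r φ z := by
  have hregion : MeasurableSet {z : ℂ | ‖z‖ < R ∧ 0 < z.im} :=
    ((isOpen_lt continuous_norm continuous_const).inter
      (isOpen_lt continuous_const Complex.continuous_im)).measurableSet
  rw [setIntegral_congr_ae hregion (g := Gfn r φ) ?_]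
  · apply setIntegral_eq_integral_of_forall_compl_eq_zero
    intro z hz
    simp only [Set.mem_setOf_eq, not_and_or, not_lt] at hz
    unfold Gfn
    rcases hz with h | h
    · rw [fderiv_phi_zero hsupp (Or.inl h)]
      simp
    · split_ifs with hc
      · exact absurd hc.1 (not_lt.2 h)
      · rfl
  · have := (sphere_null r)
    filter_upwards [(MeasureTheory.measure_eq_zero_iff_ae_notMem.mp this)] with z hz hmem
    obtain ⟨hzR, hzim⟩ := hmem
    rcases lt_trichotomy (‖z‖) r with h | h | h
    · rw [xi_fderiv_inner R hr h]
      unfold Gfn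
      rw [if_neg (by rintro ⟨_, h2⟩; exact absurd h2 (not_lt.2 (le_of_lt h)))]
      simp
    · exact absurd h hz
    · rw [xi_fderiv_apply hr h 1, xi_fderiv_apply hr h Complex.I]
      unfold Gfn
      rw [if_pos ⟨hzim, h⟩]
      simp only [Complex.one_re, Complex.one_im, Complex.I_re, Complex.I_im]
      ring

lemma Gfn_zero_of_abs_ge (hsupp : tsupport φ ⊆ {z : ℂ | ‖z‖ < R ∧ 0 ≤ z.im})
    {z : ℂ} (hz : R ≤ ‖z‖) : Gfn r φ z = 0 := by
  unfold Gfn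
  rw [fderiv_phi_zero hsupp (Or.inl hz)]
  simp

lemma step2 (hr : 0 < r) (hR : r < R) (hφ : ContDiff ℝ (⊤ : ℕ∞) φ) (hφc : HasCompactSupport φ)
    (hsupp : tsupport φ ⊆ {z : ℂ | ‖z‖ < R ∧ 0 ≤ z.im}) :
    ∫ z, Gfn r φ z
      = ∫ θ in Ioo (-Real.pi) Real.pi, ∫ ρ in Ioi (0:ℝ),
          ρ * Gfn r φ ((ρ:ℂ) * (Real.cos θ + Real.sin θ * Complex.I)) := by
  obtain ⟨M, hM0, hM⟩ := Gfn_bound hr hφ hφc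
  have hR0 : (0:ℝ) < R := lt_trans hr hR
  rw [← Complex.integral_comp_polarCoord_symm (Gfn r φ)]
  have htarget : polarCoord.target = Ioi (0:ℝ) ×ˢ Ioo (-Real.pi) Real.pi := rfl
  rw [htarget]
  set F : ℝ × ℝ → ℝ := fun p => p.1 * Gfn r φ ((p.1:ℂ) * (Real.cos p.2 + Real.sin p.2 * Complex.I)) with hF
  have hFeq : (fun p : ℝ × ℝ => p.1 • Gfn r φ (Complex.polarCoord.symm p)) = F := by
    funext p
    simp [hF, Complex.polarCoord_symm_apply, smul_eq_mul]
  rw [hFeq]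
  set μ' := (volume.restrict (Ioi (0:ℝ))).prod (volume.restrict (Ioo (-Real.pi) Real.pi)) with hμ'
  have hmeas : Measurable F := by
    apply Measurable.mul measurable_fst
    apply (Gfn_measurable hφ).comp
    apply Continuous.measurable
    exact (Complex.continuous_ofReal.comp continuous_fst).mul
      ((Complex.continuous_ofReal.comp (Real.continuous_cos.comp continuous_snd)).add
        ((Complex.continuous_ofReal.comp (Real.continuous_sin.comp continuous_snd)).mul continuous_const))
  have habs : ∀ p : ℝ × ℝ, ‖(p.1:ℂ) * (Real.cos p.2 + Real.sin p.2 * Complex.I)‖ = |p.1| := by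
    intro p
    rw [norm_mul, Complex.norm_real, Real.norm_eq_abs]
    have : ((Real.cos p.2 : ℂ) + Real.sin p.2 * Complex.I) = Complex.exp (p.2 * Complex.I) := by
      rw [Complex.exp_mul_I]
      push_cast
      ring
    rw [this, Complex.norm_exp_ofReal_mul_I, mul_one]
  have hF0 : ∀ p : ℝ × ℝ, R ≤ p.1 → F p = 0 := by
    intro p hp
    have : R ≤ ‖(p.1:ℂ) * (Real.cos p.2 + Real.sin p.2 * Complex.I)‖ := by
      rw [habs p]; exact hp.trans (le_abs_self _)
    simp only [hF]
    rw [Gfn_zero_of_abs_ge hsupp this, mul_zero]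
  have hae : ∀ᵐ p ∂μ', p.1 ∈ Ioi (0:ℝ) := by
    rw [ae_iff]
    have hset : {p : ℝ × ℝ | ¬ p.1 ∈ Ioi (0:ℝ)} = (Ioi (0:ℝ))ᶜ ×ˢ (univ : Set ℝ) := by
      ext p; simp
    rw [hset, hμ', Measure.prod_prod, Measure.restrict_apply measurableSet_Ioi.compl,
      Set.compl_inter_self, measure_empty, zero_mul]
  set s := Ioc (0:ℝ) R ×ˢ (univ : Set ℝ) with hs
  have hsmeas : MeasurableSet s := measurableSet_Ioc.prod MeasurableSet.univ
  have hFint : Integrable F μ' := by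
    have heq : F =ᵐ[μ'] s.indicator F := by
      filter_upwards [hae] with p hp
      by_cases hpR : p.1 ≤ R
      · rw [Set.indicator_of_mem (by exact ⟨⟨hp, hpR⟩, mem_univ _⟩)]
      · rw [Set.indicator_of_notMem (fun h => hpR h.1.2),
          hF0 p (le_of_not_ge hpR)]
    rw [integrable_congr heq, integrable_indicator_iff hsmeas]
    apply Measure.integrableOn_of_bounded (M := R * M)
    · rw [hμ', hs, Measure.prod_prod]
      refine ENNReal.mul_ne_top ?_ ?_
      · rw [Measure.restrict_apply measurableSet_Ioc]
        exact ((measure_mono Set.inter_subset_left).trans_lt measure_Ioc_lt_top).ne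
      · rw [Measure.restrict_apply_univ]
        exact measure_Ioo_lt_top.ne
    · exact hmeas.aestronglyMeasurable
    · filter_upwards [ae_restrict_mem hsmeas] with p hp
      obtain ⟨⟨hp1, hp2⟩, -⟩ := hp
      rw [hF, Real.norm_eq_abs, abs_mul]
      exact mul_le_mul (by rw [abs_of_pos hp1]; exact hp2) (hM _) (abs_nonneg _) (le_of_lt hR0)
  calc ∫ p in Ioi (0:ℝ) ×ˢ Ioo (-Real.pi) Real.pi, F p
      = ∫ p, F p ∂μ' := by
        rw [hμ', Measure.prod_restrict, ← Measure.volume_eq_prod]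
    _ = ∫ θ in Ioo (-Real.pi) Real.pi, ∫ ρ in Ioi (0:ℝ),
          ρ * Gfn r φ ((ρ:ℂ) * (Real.cos θ + Real.sin θ * Complex.I)) := by
        rw [hμ', integral_prod_symm F hFint]

lemma cos_sin_exp (θ : ℝ) : ((Real.cos θ : ℂ) + Real.sin θ * Complex.I) = Complex.exp (θ * Complex.I) := by
  rw [Complex.exp_mul_I]
  push_cast
  ring

lemma step3 (hr : 0 < r) (hR : r < R) (hφ : ContDiff ℝ (⊤ : ℕ∞) φ) (hφc : HasCompactSupport φ)
    (hsupp : tsupport φ ⊆ {z : ℂ | ‖z‖ < R ∧ 0 ≤ z.im})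
    {θ : ℝ} (hθ1 : 0 < θ) (hθ2 : θ < Real.pi) :
    ∫ ρ in Ioi (0:ℝ), ρ * Gfn r φ ((ρ:ℂ) * (Real.cos θ + Real.sin θ * Complex.I))
      = 2 * φ ((r : ℂ) * Complex.exp (θ * Complex.I)) := by
  set c : ℂ := (Real.cos θ : ℂ) + Real.sin θ * Complex.I with hc
  have hceq : c = Complex.exp (θ * Complex.I) := cos_sin_exp θ
  have habsc : ‖c‖ = 1 := by rw [hceq]; exact Complex.norm_exp_ofReal_mul_I θ
  have hsin : 0 < Real.sin θ := Real.sin_pos_of_pos_of_lt_pi hθ1 hθ2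
  set g : ℝ → ℝ := fun ρ => φ ((ρ:ℂ) * c) with hg
  set g' : ℝ → ℝ := fun ρ => fderiv ℝ φ ((ρ:ℂ) * c) c with hg'
  have hline : ∀ ρ : ℝ, HasDerivAt (fun t : ℝ => (t:ℂ) * c) c ρ := by
    intro ρ
    have := (Complex.ofRealCLM.hasDerivAt (x := ρ)).mul_const c
    simpa using this
  have hgderiv : ∀ ρ : ℝ, HasDerivAt g (g' ρ) ρ := by
    intro ρ
    exact ((hφ.differentiable (by simp)) ((ρ:ℂ) * c)).hasFDerivAt.comp_hasDerivAt ρ (hline ρ)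
  have hgcont : Continuous g := hφ.continuous.comp (Complex.continuous_ofReal.mul continuous_const)
  have hg'cont : Continuous g' := by
    exact ((hφ.continuous_fderiv (by simp)).comp
      (Complex.continuous_ofReal.mul continuous_const)).clm_apply continuous_const
  have habsz : ∀ ρ : ℝ, 0 ≤ ρ → ‖(ρ:ℂ) * c‖ = ρ := by
    intro ρ hρ
    rw [norm_mul, Complex.norm_real, Real.norm_eq_abs, habsc, mul_one, _root_.abs_of_nonneg hρ]
  have hg'0 : ∀ ρ : ℝ, R ≤ ρ → g' ρ = 0 := by
    intro ρ hρ
    have : R ≤ ‖(ρ:ℂ) * c‖ := by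
      rw [habsz ρ (le_trans (le_of_lt (lt_trans hr hR)) hρ)]; exact hρ
    simp only [hg']
    rw [fderiv_phi_zero hsupp (Or.inl this)]
    rfl
  have hg0 : ∀ ρ : ℝ, R ≤ ρ → g ρ = 0 := by
    intro ρ hρ
    have habs : R ≤ ‖(ρ:ℂ) * c‖ := by
      rw [habsz ρ (le_trans (le_of_lt (lt_trans hr hR)) hρ)]; exact hρ
    show φ ((ρ:ℂ) * c) = 0
    apply image_eq_zero_of_notMem_tsupport
    intro hmem
    exact absurd (hsupp hmem).1 (not_lt.2 habs)
  have hg'int : IntegrableOn g' (Ioi r) := by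
    have h1 : IntegrableOn g' (Ioc r R) := hg'cont.integrableOn_Ioc
    have h2 : IntegrableOn g' (Ioi R) := by
      apply IntegrableOn.congr_fun (integrableOn_zero) _ measurableSet_Ioi
      intro x hx
      exact (hg'0 x (le_of_lt hx)).symm
    have := h1.union h2
    rwa [Set.Ioc_union_Ioi_eq_Ioi (le_of_lt hR)] at this
  have htend : Filter.Tendsto g Filter.atTop (nhds 0) := by
    apply Filter.Tendsto.congr' _ (tendsto_const_nhds (x := (0:ℝ)))
    filter_upwards [Filter.eventually_ge_atTop R] with ρ hρ
    exact (hg0 ρ hρ).symm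
  have hFTC : ∫ x in Ioi r, g' x = 0 - g r :=
    integral_Ioi_of_hasDerivAt_of_tendsto hgcont.continuousWithinAt
      (fun x _ => hgderiv x) hg'int htend
  have hpt : ∀ ρ ∈ Ioi (0:ℝ),
      ρ * Gfn r φ ((ρ:ℂ) * c) = (Ioi r).indicator (fun ρ => -2 * g' ρ) ρ := by
    intro ρ hρ
    have hρ0 : (0:ℝ) < ρ := hρ
    set z : ℂ := (ρ:ℂ) * c with hz
    have hre : z.re = ρ * Real.cos θ := by simp [hz, hc, Complex.cos_ofReal_re]
    have him : z.im = ρ * Real.sin θ := by simp [hz, hc, Complex.sin_ofReal_re]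
    have habs : ‖z‖ = ρ := habsz ρ hρ0.le
    have hnsq : Complex.normSq z = ρ ^ 2 := by
      rw [Complex.normSq_apply, hre, him]
      linear_combination ρ ^ 2 * (Real.sin_sq_add_cos_sq θ)
    by_cases hρr : r < ρ
    · rw [Set.indicator_of_mem (Set.mem_Ioi.mpr hρr)]
      have hcond : 0 < z.im ∧ r < ‖z‖ := by
        constructor
        · rw [him]; positivity
        · rw [habs]; exact hρr
      have hcval : (fderiv ℝ φ z) c = Real.cos θ * fderiv ℝ φ z 1 + Real.sin θ * fderiv ℝ φ z Complex.I := by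
        have : c = (Real.cos θ : ℝ) • (1:ℂ) + (Real.sin θ : ℝ) • Complex.I := by
          simp [hc, Complex.real_smul]
        rw [this, map_add, ContinuousLinearMap.map_smul, ContinuousLinearMap.map_smul, smul_eq_mul, smul_eq_mul]
      unfold Gfn
      rw [if_pos hcond, hre, him, hnsq]
      simp only [hg']
      rw [← hz, hcval]
      field_simp
    · rw [Set.indicator_of_notMem (fun h => hρr (Set.mem_Ioi.mp h))]
      unfold Gfn
      rw [if_neg]
      · ring
      · rintro ⟨-, h2⟩
        rw [habs] at h2
        exact hρr h2
  calc ∫ ρ in Ioi (0:ℝ), ρ * Gfn r φ ((ρ:ℂ) * c)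
      = ∫ ρ in Ioi (0:ℝ), (Ioi r).indicator (fun ρ => -2 * g' ρ) ρ := by
        exact setIntegral_congr_fun measurableSet_Ioi hpt
    _ = ∫ ρ in Ioi (0:ℝ) ∩ Ioi r, -2 * g' ρ := by
        rw [setIntegral_indicator measurableSet_Ioi]
    _ = ∫ ρ in Ioi r, -2 * g' ρ := by
        rw [Set.Ioi_inter_Ioi, sup_eq_right.mpr hr.le]
    _ = -2 * ∫ ρ in Ioi r, g' ρ := by rw [integral_const_mul]
    _ = 2 * φ ((r : ℂ) * Complex.exp (θ * Complex.I)) := by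
        rw [hFTC, ← hceq]
        simp only [hg]
        ring

lemma step4 (hr : 0 < r) (hR : r < R) (hφ : ContDiff ℝ (⊤ : ℕ∞) φ) (hφc : HasCompactSupport φ)
    (hsupp : tsupport φ ⊆ {z : ℂ | ‖z‖ < R ∧ 0 ≤ z.im}) :
    ∫ θ in Ioo (-Real.pi) Real.pi, (∫ ρ in Ioi (0:ℝ),
        ρ * Gfn r φ ((ρ:ℂ) * (Real.cos θ + Real.sin θ * Complex.I)))
      = ∫ θ in Ioo (0:ℝ) Real.pi, 2 * φ ((r : ℂ) * Complex.exp (θ * Complex.I)) := by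
  have hcongr : ∀ᵐ θ : ℝ, θ ∈ Ioo (-Real.pi) Real.pi →
      (∫ ρ in Ioi (0:ℝ), ρ * Gfn r φ ((ρ:ℂ) * (Real.cos θ + Real.sin θ * Complex.I)))
        = (Ioo (0:ℝ) Real.pi).indicator
            (fun θ => 2 * φ ((r : ℂ) * Complex.exp (θ * Complex.I))) θ := by
    have h0 : volume ({0} : Set ℝ) = 0 := measure_singleton 0
    filter_upwards [measure_eq_zero_iff_ae_notMem.mp h0] with θ hθ0 hθ
    have hθne : θ ≠ 0 := by simpa using hθ0
    rcases lt_or_gt_of_ne hθne with hneg | hpos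
    · have hsin : Real.sin θ < 0 := Real.sin_neg_of_neg_of_neg_pi_lt hneg hθ.1
      rw [Set.indicator_of_notMem (by simp [hneg.not_gt])]
      rw [setIntegral_congr_fun measurableSet_Ioi (g := fun _ => (0:ℝ)) ?_, integral_zero]
      intro ρ hρ
      have him : ((ρ:ℂ) * (Real.cos θ + Real.sin θ * Complex.I)).im = ρ * Real.sin θ := by
        simp [Complex.sin_ofReal_re]
      simp only
      rw [show Gfn r φ ((ρ:ℂ) * (Real.cos θ + Real.sin θ * Complex.I)) = 0 from ?_, mul_zero]
      unfold Gfn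
      rw [if_neg]
      rintro ⟨h1, -⟩
      rw [him] at h1
      have : ρ * Real.sin θ < 0 := mul_neg_of_pos_of_neg hρ hsin
      exact absurd h1 this.not_gt
    · rw [Set.indicator_of_mem (show θ ∈ Ioo (0:ℝ) Real.pi from ⟨hpos, hθ.2⟩), step3 hr hR hφ hφc hsupp hpos hθ.2]
  rw [setIntegral_congr_ae measurableSet_Ioo hcongr,
    setIntegral_indicator measurableSet_Ioo,
    Set.inter_eq_self_of_subset_right
      (Set.Ioo_subset_Ioo (by linarith [Real.pi_pos]) le_rfl)]

end DirichletAux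

/-- For smooth `φ` with compact support in `(R𝔻 ∩ ℍ) ∪ (-R,R)`, the Dirichlet inner
product `(φ, ξ_r)_∇` equals the mean value of `φ` on the semicircle of radius `r`. -/
theorem dirichlet_pairing_xi (R r : ℝ) (hr : 0 < r) (hR : r < R) (φ : ℂ → ℝ)
    (hφ : ContDiff ℝ (⊤ : ℕ∞) φ) (hφc : HasCompactSupport φ)
    (hsupp : tsupport φ ⊆ {z : ℂ | ‖z‖ < R ∧ 0 ≤ z.im}) :
    (1 / (2 * Real.pi)) * ∫ z in {z : ℂ | ‖z‖ < R ∧ 0 < z.im},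
      (fderiv ℝ φ z 1 * fderiv ℝ (xiFn R r) z 1 +
        fderiv ℝ φ z Complex.I * fderiv ℝ (xiFn R r) z Complex.I)
      = (1 / Real.pi) * ∫ θ in (0:ℝ)..Real.pi, φ ((r : ℂ) * Complex.exp (θ * Complex.I)) := by
  rw [step1 hr hR hsupp, step2 hr hR hφ hφc hsupp, step4 hr hR hφ hφc hsupp,
    intervalIntegral.integral_of_le Real.pi_pos.le,
    MeasureTheory.integral_Ioc_eq_integral_Ioo, integral_const_mul]
  have hπ : Real.pi ≠ 0 := Real.pi_ne_zero
  field_simp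
  simp only [mul_comm Complex.I]
end
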